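/- arXiv:math/9911128 — 5 statements merged into one kernel-verified Lean document; each statement's English description precedes it below -/
import Mathlib

section
/- Let n ≥ 0, let M be a separable metrizable space homeomorphic to the Nöbeling space N_n^{2n+1}, and let X ⊆ M be a subspace such that {f ∈ C([0,1]^n, M) : f([0,1]^n) ⊆ X} is dense in C([0,1]^n, M) with the compact-open topology. If A and B are G_δ-subsets of M with X ⊆ A ⊆ B, then B − A is a Z_σ-set in the subspace B. -/
open Set Topology TopologicalSpace

/-- The cube `[0,1]^k`. -/
abbrev Cube (k : ℕ) : Type := Fin k → unitInterval

/-- The boundary `∂[0,1]^k` of the cube: points with some coordinate equal to `0` or `1`. -/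
def cubeBoundary (k : ℕ) : Set (Cube k) := {x | ∃ i, x i = 0 ∨ x i = 1}

/-- The Nöbeling space `N_n^{2n+1}`: the set of points of `ℝ^{2n+1}` having at most `n`
rational coordinates. -/
def NobelingSpace (n : ℕ) : Set (Fin (2 * n + 1) → ℝ) :=
  {x | Set.ncard {i | ∃ q : ℚ, x i = (q : ℝ)} ≤ n}

/-- `𝒰` is an open cover of `Y`. -/
def IsOpenCover {Y : Type*} [TopologicalSpace Y] (𝒰 : Set (Set Y)) : Prop :=
  (∀ U ∈ 𝒰, IsOpen U) ∧ ⋃₀ 𝒰 = Set.univ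

/-- Two maps `f g : Z → Y` are `𝒰`-close. -/
def UClose {Z Y : Type*} (𝒰 : Set (Set Y)) (f g : Z → Y) : Prop :=
  ∀ z, ∃ U ∈ 𝒰, f z ∈ U ∧ g z ∈ U

/-- `A` is a `Z`-set in `Y` in the `n`-dimensional sense. -/
def IsZSet (n : ℕ) {Y : Type*} [TopologicalSpace Y] (A : Set Y) : Prop :=
  IsClosed A ∧ Dense {f : C(Cube n, Y) | Set.range ⇑f ∩ A = ∅}

/-- A `Z_σ`-set: countable union of `Z`-sets. -/
def IsZSigmaSet (n : ℕ) {Y : Type*} [TopologicalSpace Y] (A : Set Y) : Prop :=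
  ∃ F : ℕ → Set Y, (∀ i, IsZSet n (F i)) ∧ A = ⋃ i, F i

/-- A strong `Z`-set. -/
def IsStrongZSet (n : ℕ) {X : Type*} [TopologicalSpace X] (A : Set X) : Prop :=
  IsClosed A ∧ ∀ 𝒰 : Set (Set X), IsOpenCover 𝒰 →
    ∃ g : C(X, X), UClose 𝒰 ⇑g id ∧ closure (Set.range ⇑g) ∩ A = ∅

/-- The discrete `n`-cells property. -/
def DiscreteNCellsProperty (n : ℕ) (X : Type*) [TopologicalSpace X] : Prop :=
  ∀ f : C(Cube n × ℕ, X), ∀ 𝒰 : Set (Set X), IsOpenCover 𝒰 →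
    ∃ g : C(Cube n × ℕ, X), UClose 𝒰 ⇑g ⇑f ∧
      ∀ x : X, ∃ V ∈ nhds x, {k : ℕ | ∃ c : Cube n, g (c, k) ∈ V}.Subsingleton

/-- `X` is `LC^{n-1}`: local extension of maps on `∂[0,1]^k` for all `k ≤ n`. -/
def IsLCUpTo (n : ℕ) (X : Type*) [TopologicalSpace X] : Prop :=
  ∀ k ≤ n, ∀ x : X, ∀ U ∈ nhds x, ∃ V ∈ nhds x,
    ∀ f : C(cubeBoundary k, X), (∀ z, f z ∈ V) →
      ∃ F : C(Cube k, X), (∀ z, F z ∈ U) ∧ ∀ z : cubeBoundary k, F z = f z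

/-- `X` is `C^{n-1}`: maps on `∂[0,1]^k` extend over `[0,1]^k`, for all `k ≤ n`. -/
def IsCUpTo (n : ℕ) (X : Type*) [TopologicalSpace X] : Prop :=
  ∀ k ≤ n, ∀ f : C(cubeBoundary k, X),
    ∃ F : C(Cube k, X), ∀ z : cubeBoundary k, F z = f z

/-- `X ⊆ M` is `LC^{n-1}` relative to `M`. -/
def IsLCRelUpTo (n : ℕ) {M : Type*} [TopologicalSpace M] (X : Set M) : Prop :=
  ∀ k ≤ n, ∀ x : M, ∀ U ∈ nhds x, ∃ V ∈ nhds x,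
    ∀ f : C(cubeBoundary k, M), (∀ z, f z ∈ V ∩ X) →
      ∃ F : C(Cube k, M), (∀ z, F z ∈ U ∩ X) ∧ ∀ z : cubeBoundary k, F z = f z

/-- Covering dimension `≤ n`. -/
def CovDimLE (X : Type*) [TopologicalSpace X] (n : ℕ) : Prop :=
  ∀ 𝒰 : Set (Set X), 𝒰.Finite → (∀ U ∈ 𝒰, IsOpen U) → ⋃₀ 𝒰 = Set.univ →
    ∃ 𝒱 : Set (Set X), 𝒱.Finite ∧ (∀ V ∈ 𝒱, IsOpen V) ∧ ⋃₀ 𝒱 = Set.univ ∧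
      (∀ V ∈ 𝒱, ∃ U ∈ 𝒰, V ⊆ U) ∧
      ∀ x : X, Set.ncard {V | V ∈ 𝒱 ∧ x ∈ V} ≤ n + 1

/-- Covering dimension equal to `n`: `≤ n` but not `≤ m` for any `m < n`. -/
def CovDimEq (X : Type*) [TopologicalSpace X] (n : ℕ) : Prop :=
  CovDimLE X n ∧ ∀ m : ℕ, m + 1 ≤ n → ¬ CovDimLE X m

/-- `X` is an absolute extensor in dimension `n`. -/
def IsAEn (n : ℕ) (X : Type*) [TopologicalSpace X] : Prop :=
  ∀ (Z : Type) [TopologicalSpace Z] [MetrizableSpace Z], CovDimLE Z n →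
    ∀ A : Set Z, IsClosed A → ∀ f : C(A, X),
      ∃ F : C(Z, X), ∀ a : A, F a = f a

/-- A `Z`-embedding: an embedding whose range is a `Z`-set. -/
def IsZEmbedding (n : ℕ) {C X : Type*} [TopologicalSpace C] [TopologicalSpace X]
    (g : C → X) : Prop :=
  IsEmbedding g ∧ IsZSet n (Set.range g)

/-- `X` is strongly `K`-universal. -/
def StronglyUniversal (n : ℕ) (K : (Z : Type) → TopologicalSpace Z → Prop)
    (X : Type*) [TopologicalSpace X] : Prop :=
  ∀ (C : Type) [tC : TopologicalSpace C], K C tC →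
    ∀ f : C(C, X), ∀ D : Set C, IsClosed D →
      IsZEmbedding n (fun d : D => f d) →
      ∀ 𝒰 : Set (Set X), IsOpenCover 𝒰 →
        ∃ g : C(C, X), IsZEmbedding n ⇑g ∧ (∀ d ∈ D, g d = f d) ∧ UClose 𝒰 ⇑g ⇑f

/-- `X` is a `K`-absorbing set (`X` is `n`-dimensional, an `AE(n)`, a countable union of
strong `Z`-sets, a countable union of subspaces from `K`, and strongly `K`-universal). -/
def IsAbsorbingSet (n : ℕ) (K : (Z : Type) → TopologicalSpace Z → Prop)
    (X : Type) [TopologicalSpace X] : Prop :=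
  CovDimEq X n ∧ IsAEn n X ∧
  (∃ A : ℕ → Set X, (∀ i, IsStrongZSet n (A i)) ∧ ⋃ i, A i = Set.univ) ∧
  (∃ A : ℕ → Set X, (∀ i, K (A i) inferInstance) ∧ ⋃ i, A i = Set.univ) ∧
  StronglyUniversal n K X

/-- `K` is a class of separable metrizable spaces. -/
def IsSepMetrClass (K : (Z : Type) → TopologicalSpace Z → Prop) : Prop :=
  ∀ (Z : Type) (tZ : TopologicalSpace Z), K Z tZ →
    @MetrizableSpace Z tZ ∧ @SeparableSpace Z tZ

/-- `K` is topological: closed under homeomorphisms. -/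
def IsTopologicalClass (K : (Z : Type) → TopologicalSpace Z → Prop) : Prop :=
  ∀ (Z₁ : Type) [t₁ : TopologicalSpace Z₁] (Z₂ : Type) [t₂ : TopologicalSpace Z₂],
    K Z₁ t₁ → Nonempty (Z₁ ≃ₜ Z₂) → K Z₂ t₂

/-- `K` is finitely additive: a space covered by finitely many closed subspaces from `K`
belongs to `K`. -/
def IsFinitelyAdditiveClass (K : (Z : Type) → TopologicalSpace Z → Prop) : Prop :=
  ∀ (Z : Type) [tZ : TopologicalSpace Z] (m : ℕ) (A : Fin m → Set Z),
    (∀ i, IsClosed (A i)) → (⋃ i, A i) = Set.univ →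
    (∀ i, K (A i) inferInstance) → K Z tZ

/-- `K` is hereditary with respect to closed subspaces. -/
def IsClosedHereditaryClass (K : (Z : Type) → TopologicalSpace Z → Prop) : Prop :=
  ∀ (Z : Type) [tZ : TopologicalSpace Z], K Z tZ →
    ∀ A : Set Z, IsClosed A → K (↥A) inferInstance

/-- `B ⊆ Y` is locally `n`-negligible. -/
def LocallyNNegligible (n : ℕ) {Y : Type*} [TopologicalSpace Y] (B : Set Y) : Prop :=
  ∀ U : Set Y, IsOpen U → ∀ k ≤ n,
    Dense {f : C(Cube k, ↥U) | Set.range (fun z => (f z : Y)) ∩ B = ∅}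

/-- The Borelian classes of subsets of a space: `Borelian true α` is the additive class
`𝒜_α` and `Borelian false α` is the multiplicative class `ℳ_α`. -/
inductive Borelian {X : Type} [TopologicalSpace X] : Bool → Ordinal.{0} → Set X → Prop
  | isOpen {s : Set X} (h : IsOpen s) : Borelian true 0 s
  | isClosed {s : Set X} (h : IsClosed s) : Borelian false 0 s
  | iUnion {α : Ordinal} (hα : α ≠ 0) (f : ℕ → Set X) (β : ℕ → Ordinal)
      (hβ : ∀ i, β i < α) (h : ∀ i, Borelian false (β i) (f i)) :
      Borelian true α (⋃ i, f i)
  | iInter {α : Ordinal} (hα : α ≠ 0) (f : ℕ → Set X) (β : ℕ → Ordinal)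
      (hβ : ∀ i, β i < α) (h : ∀ i, Borelian true (β i) (f i)) :
      Borelian false α (⋂ i, f i)

/-- `Z` belongs to the absolute additive (`b = true`) resp. multiplicative (`b = false`)
Borelian class `α`: every embedding into a Polish space has image of class `α`. -/
def InAbsoluteBorelClass (b : Bool) (α : Ordinal) (Z : Type) [tZ : TopologicalSpace Z] :
    Prop :=
  ∀ (P : Type) [TopologicalSpace P] [PolishSpace P], ∀ e : Z → P,
    IsEmbedding e → Borelian b α (Set.range e)

/-- The class `ℳ_α(n)` (`b = false`) resp. `𝒜_α(n)` (`b = true`): separable metrizable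
spaces of covering dimension `≤ n` in the corresponding absolute Borelian class. -/
def BorelClassDim (b : Bool) (α : Ordinal) (n : ℕ) :
    (Z : Type) → TopologicalSpace Z → Prop :=
  fun Z tZ => @MetrizableSpace Z tZ ∧ @SeparableSpace Z tZ ∧
    @InAbsoluteBorelClass b α Z tZ ∧ @CovDimLE Z tZ n

/-!
Write `A = ⋂ᵢ Uᵢ` with `Uᵢ` open. Then `B \ A = ⋃ᵢ (B \ Uᵢ)`, and each `B \ Uᵢ` is closed in
`B` and missed by every cube map with image in `X`. Such maps are dense in `C([0,1]^n, M)`,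
hence also in `C([0,1]^n, B)`, which carries the topology induced by postcomposition with the
inclusion `B ↪ M`. So each `B \ Uᵢ` is a `Z`-set in `B`.
-/

theorem Topology.IsInducing.dense_preimage {α β : Type*} [TopologicalSpace α]
    [TopologicalSpace β] {f : α → β} (hf : IsInducing f) {s : Set β} (hs : Dense s)
    (hsf : s ⊆ range f) : Dense (f ⁻¹' s) :=
  hf.dense_iff.2 fun x => by
    rw [image_preimage_eq_of_subset hsf]
    exact hs (f x)

theorem dense_setOf_range_subset_subtype {Z M : Type*} [TopologicalSpace Z]
    [TopologicalSpace M] {B X : Set M} (hXB : X ⊆ B)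
    (hX : Dense {f : C(Z, M) | range f ⊆ X}) :
    Dense {g : C(Z, B) | range g ⊆ Subtype.val ⁻¹' X} := by
  have hlift : {f : C(Z, M) | range f ⊆ X} ⊆
      range (ContinuousMap.comp ⟨Subtype.val, continuous_subtype_val⟩) :=
    fun f hf => ⟨⟨fun z => ⟨f z, hXB (hf ⟨z, rfl⟩)⟩, by fun_prop⟩, rfl⟩
  convert (ContinuousMap.isInducing_postcomp _ IsInducing.subtypeVal).dense_preimage hX hlift
    using 1
  ext g
  simp [range_subset_iff]

theorem isZSet_of_disjoint {n : ℕ} {Y : Type*} [TopologicalSpace Y] {X F : Set Y}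
    (hF : IsClosed F) (hX : Dense {f : C(Cube n, Y) | range f ⊆ X}) (hXF : Disjoint X F) :
    IsZSet n F :=
  ⟨hF, hX.mono fun _ hf => (hXF.mono_left hf).inter_eq⟩

theorem IsGδ.isZSigmaSet_compl {n : ℕ} {Y : Type*} [TopologicalSpace Y] {X A : Set Y}
    (hX : Dense {f : C(Cube n, Y) | range f ⊆ X}) (hA : IsGδ A) (hXA : X ⊆ A) :
    IsZSigmaSet n Aᶜ := by
  obtain ⟨U, hU, rfl⟩ := hA.eq_iInter_nat
  refine ⟨fun i => (U i)ᶜ, fun i => isZSet_of_disjoint (hU i).isClosed_compl hX ?_,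
    compl_iInter U⟩
  exact disjoint_compl_right_iff_subset.2 (hXA.trans (iInter_subset U i))

theorem statement3_general (n : ℕ) (M : Type) [TopologicalSpace M] (X : Set M)
    (hX : Dense {f : C(Cube n, M) | Set.range ⇑f ⊆ X})
    (A B : Set M) (hA : IsGδ A) (hXA : X ⊆ A) (hAB : A ⊆ B) :
    IsZSigmaSet n {b : ↥B | (b : M) ∈ B \ A} := by
  have hZσ := (hA.preimage continuous_subtype_val).isZSigmaSet_compl
    (dense_setOf_range_subset_subtype (hXA.trans hAB) hX) (preimage_mono hXA)
  convert hZσ using 1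
  ext b
  simp

theorem statement3 (n : ℕ) (M : Type) [TopologicalSpace M] [MetrizableSpace M]
    [SeparableSpace M] (hM : Nonempty (M ≃ₜ ↥(NobelingSpace n))) (X : Set M)
    (hX : Dense {f : C(Cube n, M) | Set.range ⇑f ⊆ X})
    (A B : Set M) (hA : IsGδ A) (hB : IsGδ B) (hXA : X ⊆ A) (hAB : A ⊆ B) :
    IsZSigmaSet n {b : ↥B | (b : M) ∈ B \ A} :=
  statement3_general n M X hX A B hA hXA hAB
end

section
/- Let n ≥ 0. The complement ℝ^{2n+1} − N_n^{2n+1} of the Nöbeling space is locally n-negligible in ℝ^{2n+1}; that is, for every open set U ⊆ ℝ^{2n+1}, every k ≤ n, every continuous map f : [0,1]^k → U and every ε > 0, there exists a continuous map g : [0,1]^k → U with g([0,1]^k) ⊆ U ∩ N_n^{2n+1} and sup-distance from f less than ε. -/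
open Set Topology TopologicalSpace

def lipAlg (k : ℕ) : Subalgebra ℝ C(Cube k, ℝ) where
  carrier := {f | ∃ K : NNReal, LipschitzWith K ⇑f}
  mul_mem' := by
    rintro f g ⟨Kf, hKf⟩ ⟨Kg, hKg⟩
    refine ⟨‖f‖₊ * Kg + ‖g‖₊ * Kf, LipschitzWith.of_dist_le_mul fun x y => ?_⟩
    have h1 := hKf.dist_le_mul x y
    have h2 := hKg.dist_le_mul x y
    have h3 : ‖f x‖ ≤ ‖f‖ := f.norm_coe_le_norm x
    have h4 : ‖g y‖ ≤ ‖g‖ := g.norm_coe_le_norm y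
    have h5 : dist ((f * g) x) ((f * g) y)
        ≤ ‖f x‖ * dist (g x) (g y) + ‖g y‖ * dist (f x) (f y) := by
      simp only [ContinuousMap.mul_apply, Real.dist_eq, Real.norm_eq_abs]
      calc |f x * g x - f y * g y| = |f x * (g x - g y) + g y * (f x - f y)| := by ring_nf
        _ ≤ |f x * (g x - g y)| + |g y * (f x - f y)| := abs_add_le _ _
        _ = |f x| * |g x - g y| + |g y| * |f x - f y| := by rw [abs_mul, abs_mul]
    have hd : (0:ℝ) ≤ dist x y := dist_nonneg
    have e : ((‖f‖₊ * Kg + ‖g‖₊ * Kf : NNReal) : ℝ) = ‖f‖ * Kg + ‖g‖ * Kf := by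
      push_cast; rfl
    rw [e]
    have hfx : (0:ℝ) ≤ ‖f x‖ := norm_nonneg _
    have hgy : (0:ℝ) ≤ ‖g y‖ := norm_nonneg _
    have hfn : (0:ℝ) ≤ ‖f‖ := norm_nonneg _
    have hgn : (0:ℝ) ≤ ‖g‖ := norm_nonneg _
    have hdg : (0:ℝ) ≤ dist (g x) (g y) := dist_nonneg
    have hdf : (0:ℝ) ≤ dist (f x) (f y) := dist_nonneg
    nlinarith [mul_le_mul h3 h2 hdg hfn, mul_le_mul h4 h1 hdf hgn]
  add_mem' := by
    rintro f g ⟨Kf, hKf⟩ ⟨Kg, hKg⟩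
    exact ⟨Kf + Kg, by exact hKf.add hKg⟩
  algebraMap_mem' := fun r => ⟨0, by simpa using LipschitzWith.const (α := Cube _) (b := r)⟩

lemma lipAlg_separates (k : ℕ) : (lipAlg k).SeparatesPoints := by
  intro x y hxy
  have : ∃ i, x i ≠ y i := by
    by_contra h; push_neg at h; exact hxy (funext h)
  obtain ⟨i, hi⟩ := this
  refine ⟨_, ⟨⟨fun z => (z i : ℝ), by fun_prop⟩, ⟨1, LipschitzWith.of_dist_le_mul fun a b => ?_⟩, rfl⟩, ?_⟩
  · show dist ((a i : ℝ)) ((b i : ℝ)) ≤ 1 * dist a b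
    rw [← Subtype.dist_eq (a i) (b i), one_mul]
    exact dist_le_pi_dist a b i
  · simpa [Subtype.ext_iff] using hi

lemma exists_lip_near (k : ℕ) (f : C(Cube k, ℝ)) {η : ℝ} (hη : 0 < η) :
    ∃ p : C(Cube k, ℝ), (∃ K : NNReal, LipschitzWith K ⇑p) ∧ ∀ z, |p z - f z| < η := by
  obtain ⟨⟨p, hp⟩, hb⟩ :=
    ContinuousMap.exists_mem_subalgebra_near_continuousMap_of_separatesPoints
      (lipAlg k) (lipAlg_separates k) f η hη
  refine ⟨p, hp, fun z => ?_⟩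
  calc |p z - f z| = ‖(p - f) z‖ := by simp [Real.norm_eq_abs]
    _ ≤ ‖p - f‖ := (p - f).norm_coe_le_norm z
    _ < η := hb

def flatAvoid (n k : ℕ) (S : Finset (Fin (2*n+1))) (q : Fin (2*n+1) → ℚ) :
    Set C(Cube k, Fin (2*n+1) → ℝ) :=
  {g | S.card = n+1 → ∀ z, ∃ i ∈ S, g z i ≠ (q i : ℝ)}

lemma flatAvoid_open (n k : ℕ) (S : Finset (Fin (2*n+1))) (q : Fin (2*n+1) → ℚ) :
    IsOpen (flatAvoid n k S q) := by
  by_cases hcard : S.card = n+1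
  · set L : Set (Fin (2*n+1) → ℝ) := {x | ∀ i ∈ S, x i = (q i : ℝ)} with hL
    have hLclosed : IsClosed L := by
      have : L = ⋂ i ∈ S, {x : Fin (2*n+1) → ℝ | x i = (q i : ℝ)} := by
        ext x; simp [hL]
      rw [this]
      exact isClosed_biInter fun i _ =>
        isClosed_eq (continuous_apply i) continuous_const
    rw [Metric.isOpen_iff]
    intro g hg
    have hrange : range ⇑g ⊆ Lᶜ := by
      rintro _ ⟨z, rfl⟩
      obtain ⟨i, hiS, hi⟩ := hg hcard z
      exact fun hx => hi (hx i hiS)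
    obtain ⟨δ, hδ, hth⟩ := (isCompact_range g.continuous).exists_thickening_subset_open
      hLclosed.isOpen_compl hrange
    refine ⟨δ, hδ, fun g' hg' => ?_⟩
    intro _ z
    have : g' z ∈ Lᶜ := by
      apply hth
      rw [Metric.mem_thickening_iff]
      exact ⟨g z, mem_range_self z,
        lt_of_le_of_lt (ContinuousMap.dist_apply_le_dist z) (Metric.mem_ball.1 hg')⟩
    simp only [mem_compl_iff, hL, mem_setOf_eq, not_forall] at this
    obtain ⟨i, hiS, hi⟩ := this
    exact ⟨i, hiS, hi⟩
  · have : flatAvoid n k S q = univ := by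
      ext g; simp [flatAvoid, hcard]
    rw [this]; exact isOpen_univ

lemma cube_dimH (k : ℕ) : dimH (univ : Set (Cube k)) ≤ (k : ENNReal) := by
  have hiso : Isometry (fun (z : Cube k) (j : Fin k) => (z j : ℝ)) := by
    apply Isometry.of_dist_eq
    intro a b
    rw [dist_pi_def, dist_pi_def]
    norm_cast
  rw [← hiso.dimH_image univ]
  calc dimH ((fun (z : Cube k) (j : Fin k) => (z j : ℝ)) '' univ)
      ≤ dimH (univ : Set (Fin k → ℝ)) := dimH_mono (subset_univ _)
    _ = k := Real.dimH_univ_pi_fin k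

lemma flatAvoid_dense (n k : ℕ) (hk : k ≤ n) (S : Finset (Fin (2*n+1))) (q : Fin (2*n+1) → ℚ) :
    Dense (flatAvoid n k S q) := by
  by_cases hcard : S.card = n+1
  swap
  · have : flatAvoid n k S q = univ := by ext g; simp [flatAvoid, hcard]
    rw [this]; exact dense_univ
  rw [Metric.dense_iff]
  intro g0 r hr
  have hr4 : 0 < r/4 := by linarith
  -- Lipschitz approximations of the S-coordinates of g0
  have hex : ∀ i : ↥S, ∃ p : C(Cube k, ℝ), (∃ K : NNReal, LipschitzWith K ⇑p) ∧
      ∀ z, |p z - g0 z i| < r/4 :=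
    fun i => exists_lip_near k ⟨fun z => g0 z (i : Fin (2*n+1)),
      (continuous_apply _).comp g0.continuous⟩ hr4
  choose p hplip hpnear using hex
  choose K hK using hplip
  set Km : NNReal := Finset.univ.sup K with hKm
  set Φ : Cube k → (↥S → ℝ) := fun z i => (q i : ℝ) - p i z with hΦdef
  have hΦ : LipschitzWith Km Φ := by
    apply LipschitzWith.of_dist_le_mul
    intro x y
    rw [dist_pi_le_iff (by positivity)]
    intro i
    have h1 : dist (Φ x i) (Φ y i) = dist (p i x) (p i y) := by
      simp only [hΦdef, Real.dist_eq]
      ring_nf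
      rw [abs_sub_comm]
      ring_nf
    rw [h1]
    calc dist (p i x) (p i y) ≤ (K i : ℝ) * dist x y := (hK i).dist_le_mul x y
      _ ≤ (Km : ℝ) * dist x y := by
          gcongr
          exact_mod_cast Finset.le_sup (Finset.mem_univ i)
  have hA : dimH (range Φ) ≤ (k : ENNReal) := by
    rw [← image_univ]
    exact (hΦ.dimH_image_le univ).trans (cube_dimH k)
  have hSne : Nonempty ↥S := by
    obtain ⟨x, hx⟩ := Finset.card_pos.mp (show 0 < S.card by omega)
    exact ⟨⟨x, hx⟩⟩
  -- find a small translation avoiding the image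
  have hc : ∃ c : ↥S → ℝ, c ∈ Metric.ball (0 : ↥S → ℝ) (r/4) ∧ c ∉ range Φ := by
    by_contra hcon
    push_neg at hcon
    have hball : Metric.ball (0 : ↥S → ℝ) (r/4) ⊆ range Φ := fun c hcb => hcon c hcb
    have hnhds : range Φ ∈ nhds (0 : ↥S → ℝ) :=
      Filter.mem_of_superset (Metric.ball_mem_nhds _ hr4) hball
    have hdim := Real.dimH_of_mem_nhds hnhds
    have hfr : Module.finrank ℝ (↥S → ℝ) = n + 1 := by
      rw [Module.finrank_fintype_fun_eq_card, Fintype.card_coe, hcard]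
    rw [hfr] at hdim
    rw [hdim] at hA
    have : n + 1 ≤ k := by exact_mod_cast hA
    omega
  obtain ⟨c, hcball, hcA⟩ := hc
  -- the perturbed map
  have hgc : Continuous fun (z : Cube k) (i : Fin (2*n+1)) =>
      if h : i ∈ S then p ⟨i, h⟩ z + c ⟨i, h⟩ else g0 z i := by
    apply continuous_pi
    intro i
    by_cases h : i ∈ S
    · simp only [dif_pos h]
      exact ((p ⟨i, h⟩).continuous).add continuous_const
    · simp only [dif_neg h]
      exact (continuous_apply i).comp g0.continuous
  set g : C(Cube k, Fin (2*n+1) → ℝ) := ⟨_, hgc⟩ with hg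
  have hcnorm : ∀ i : ↥S, |c i| < r/4 := by
    intro i
    have := dist_le_pi_dist c (0 : ↥S → ℝ) i
    have h2 : dist c (0 : ↥S → ℝ) < r/4 := by simpa [Metric.mem_ball] using hcball
    simp only [Pi.zero_apply, Real.dist_eq, sub_zero] at this ⊢
    linarith
  refine ⟨g, ?_, ?_⟩
  · rw [Metric.mem_ball]
    rw [ContinuousMap.dist_lt_iff hr]
    intro z
    rw [dist_pi_lt_iff hr]
    intro i
    by_cases h : i ∈ S
    · have : g z i = p ⟨i, h⟩ z + c ⟨i, h⟩ := by simp [hg, dif_pos h]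
      rw [this, Real.dist_eq]
      have h1 := hpnear ⟨i, h⟩ z
      have h2 := hcnorm ⟨i, h⟩
      rw [abs_lt] at *
      constructor <;> linarith [h1.1, h1.2, h2.1, h2.2]
    · have : g z i = g0 z i := by simp [hg, dif_neg h]
      rw [this]; simpa using hr
  · intro _ z
    have hne : Φ z ≠ c := fun hzc => hcA ⟨z, hzc⟩
    obtain ⟨i, hi⟩ := Function.ne_iff.1 hne
    refine ⟨i, i.2, ?_⟩
    have : g z (i : Fin (2*n+1)) = p i z + c i := by
      simp [hg, dif_pos i.2]
    rw [this]
    intro hE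
    apply hi
    simp only [hΦdef]
    linarith

set_option maxHeartbeats 1000000 in
set_option synthInstance.maxHeartbeats 1000000 in
theorem statement6 (n : ℕ) (U : Set (Fin (2 * n + 1) → ℝ)) (hU : IsOpen U)
    (k : ℕ) (hk : k ≤ n) (f : C(Cube k, ↥U)) (ε : ℝ) (hε : 0 < ε) :
    ∃ g : C(Cube k, ↥U),
      (∀ z, (g z : Fin (2 * n + 1) → ℝ) ∈ U ∩ NobelingSpace n) ∧ dist f g < ε := by
  classical
  set f' : C(Cube k, Fin (2*n+1) → ℝ) :=
    ⟨fun z => (f z : Fin (2*n+1) → ℝ), continuous_subtype_val.comp f.continuous⟩ with hf'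
  have hrange : range ⇑f' ⊆ U := by rintro _ ⟨z, rfl⟩; exact (f z).2
  obtain ⟨δ0, hδ0, hth⟩ :=
    (isCompact_range f'.continuous).exists_thickening_subset_open hU hrange
  set δ : ℝ := min δ0 ε / 2 with hδdef
  have hmin : 0 < min δ0 ε := lt_min hδ0 hε
  have hδpos : 0 < δ := by rw [hδdef]; linarith
  have hδδ0 : δ ≤ δ0 := by
    have := min_le_left δ0 ε; rw [hδdef]; linarith
  have hδε : δ < ε := by
    have := min_le_right δ0 ε; rw [hδdef]; linarith
  have hGdense : Dense (⋂ P : Finset (Fin (2*n+1)) × (Fin (2*n+1) → ℚ),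
      flatAvoid n k P.1 P.2) :=
    dense_iInter_of_isOpen (fun P => flatAvoid_open n k P.1 P.2)
      (fun P => flatAvoid_dense n k hk P.1 P.2)
  obtain ⟨g', hg'ball, hg'G⟩ := Metric.dense_iff.mp hGdense f' δ hδpos
  rw [Metric.mem_ball] at hg'ball
  have hgU : ∀ z, g' z ∈ U := by
    intro z
    apply hth
    rw [Metric.mem_thickening_iff]
    exact ⟨f' z, mem_range_self z,
      lt_of_le_of_lt (ContinuousMap.dist_apply_le_dist z) (lt_of_lt_of_le hg'ball hδδ0)⟩
  have hnob : ∀ z, g' z ∈ NobelingSpace n := by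
    intro z
    by_contra hbad
    simp only [NobelingSpace, mem_setOf_eq, not_le] at hbad
    set R : Set (Fin (2*n+1)) := {i | ∃ q : ℚ, g' z i = (q:ℝ)} with hR
    have hfin : R.Finite := Set.toFinite R
    have hcard : n + 1 ≤ hfin.toFinset.card := by
      rw [← Set.ncard_eq_toFinset_card R hfin]
      omega
    obtain ⟨T, hTsub, hTcard⟩ := Finset.exists_subset_card_eq hcard
    set q : Fin (2*n+1) → ℚ :=
      fun i => if h : ∃ r : ℚ, g' z i = (r:ℝ) then h.choose else 0 with hq
    have hmem := mem_iInter.mp hg'G (T, q)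
    obtain ⟨i, hiT, hne⟩ := hmem hTcard z
    have h : ∃ r : ℚ, g' z i = (r:ℝ) := hfin.mem_toFinset.mp (hTsub hiT)
    apply hne
    show g' z i = (q i : ℝ)
    have : q i = h.choose := by rw [hq]; exact dif_pos h
    rw [this, ← h.choose_spec]
  refine ⟨⟨fun z => ⟨g' z, hgU z⟩, g'.continuous.subtype_mk _⟩, fun z => ⟨hgU z, hnob z⟩, ?_⟩
  have : dist f ⟨fun z => (⟨g' z, hgU z⟩ : ↥U), g'.continuous.subtype_mk _⟩ ≤ δ := by
    rw [ContinuousMap.dist_le (le_of_lt hδpos)]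
    intro x
    rw [Subtype.dist_eq]
    exact le_of_lt (lt_of_le_of_lt ((dist_comm (f' x) (g' x)) ▸
      ContinuousMap.dist_apply_le_dist x) hg'ball)
  linarith
end

section
/- Let n ≥ 0, let X̃ be a separable completely metrizable space and let X ⊆ X̃ be a subspace such that the set {f ∈ C([0,1]^n, X̃) : f([0,1]^n) ⊆ X} is dense in C([0,1]^n, X̃) with the compact-open topology. Then a compact subset K of X is a Z-set in X if and only if K is a Z-set in X̃. -/
open Set Topology TopologicalSpace

theorem statement7 (n : ℕ) (X' : Type) [TopologicalSpace X'] [PolishSpace X']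
    (X : Set X') (hdense : Dense {f : C(Cube n, X') | Set.range ⇑f ⊆ X})
    (K : Set X') (hKX : K ⊆ X) (hK : IsCompact K) :
    IsZSet n {x : ↥X | (x : X') ∈ K} ↔ IsZSet n K := by
  have hKc : IsClosed K := hK.isClosed
  set ι : C(↥X, X') := ⟨Subtype.val, continuous_subtype_val⟩ with hι
  have hind : IsInducing (ι.comp : C(Cube n, ↥X) → C(Cube n, X')) :=
    ContinuousMap.isInducing_postcomp ι IsInducing.subtypeVal
  constructor
  · rintro ⟨-, hd⟩
    refine ⟨hKc, ?_⟩
    rw [dense_iff_inter_open]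
    rintro O hO ⟨f, hf⟩
    obtain ⟨g, hgX, hgO⟩ := hdense.exists_mem_open hO ⟨f, hf⟩
    let g' : C(Cube n, ↥X) :=
      ⟨fun z => ⟨g z, hgX (Set.mem_range_self z)⟩, g.continuous.subtype_mk _⟩
    have hg' : ι.comp g' ∈ O := by
      have : ι.comp g' = g := by ext z; rfl
      rwa [this]
    obtain ⟨h, hh, hhO⟩ := hd.exists_mem_open (hO.preimage hind.continuous) ⟨g', hg'⟩
    refine ⟨ι.comp h, hhO, ?_⟩
    show Set.range ⇑(ι.comp h) ∩ K = ∅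
    rw [Set.eq_empty_iff_forall_notMem]
    rintro x ⟨⟨z, hz⟩, hxK⟩
    have : h z ∈ Set.range ⇑h ∩ {x : ↥X | (x : X') ∈ K} :=
      ⟨Set.mem_range_self z, by simpa [← hz, hι] using hxK⟩
    rw [hh] at this
    exact this
  · rintro ⟨-, hd⟩
    refine ⟨hKc.preimage continuous_subtype_val, ?_⟩
    rw [dense_iff_inter_open]
    rintro O hO ⟨f, hf⟩
    obtain ⟨O', hO', hO'eq⟩ := hind.isOpen_iff.mp hO
    have hfO' : ι.comp f ∈ O' := by rw [← hO'eq] at hf; exact hf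
    obtain ⟨g, hgK, hgO'⟩ := hd.exists_mem_open hO' ⟨ι.comp f, hfO'⟩
    have hW : IsOpen {h : C(Cube n, X') | Set.MapsTo ⇑h Set.univ Kᶜ} :=
      ContinuousMap.isOpen_setOf_mapsTo isCompact_univ hKc.isOpen_compl
    have hgW : g ∈ {h : C(Cube n, X') | Set.MapsTo ⇑h Set.univ Kᶜ} := by
      intro z _
      have h2 := Set.eq_empty_iff_forall_notMem.mp hgK
      exact fun hzK => h2 (g z) ⟨Set.mem_range_self z, hzK⟩
    obtain ⟨g'', hg''X, hg''O', hg''W⟩ :=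
      hdense.exists_mem_open (hO'.inter hW) ⟨g, hgO', hgW⟩
    let g2 : C(Cube n, ↥X) :=
      ⟨fun z => ⟨g'' z, hg''X (Set.mem_range_self z)⟩, g''.continuous.subtype_mk _⟩
    have hg2O : g2 ∈ O := by
      rw [← hO'eq]
      show ι.comp g2 ∈ O'
      have : ι.comp g2 = g'' := by ext z; rfl
      rwa [this]
    refine ⟨g2, hg2O, ?_⟩
    show Set.range ⇑g2 ∩ {x : ↥X | (x : X') ∈ K} = ∅
    rw [Set.eq_empty_iff_forall_notMem]
    rintro x ⟨⟨z, hz⟩, hxK⟩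
    exact hg''W (Set.mem_univ z) (by simpa [g2, ← hz] using hxK)
end

section
/- Let n ≥ 0 and let X be a separable metrizable space of covering dimension at most n which is LC^{n-1}. If X = ⋃_{i∈ℕ} X_i where each X_i is a strong Z-set in X, then every compact subset of X is a strong Z-set in X. -/
open Set Topology TopologicalSpace

/-!
Let `ρ` be a `1`-Lipschitz Lebesgue-number function of the given cover `𝒰`, bounded by `1`.
Push `X` off `A 0, A 1, …` in turn by maps `h i` that move each point `z` by at most
`c i * ρ z`, where `c (i + 1) ≤ c i / 2` and `4 * c (i + 1)` is at most the distance
by which `h i` keeps `X` away from the compact set `K ∩ A i`. The compositions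
`g m = h (m - 1) ∘ ⋯ ∘ h 0` then move every point `x` by less than `ρ x`, so they are
`𝒰`-close to the identity, and the steps after `h l` move points by less than `2 * c (l + 1)`
in total, so `g m` keeps `X` at distance `2 * c (l + 1)` from `K ∩ A l` for all `m > l`.
By compactness finitely many of these neighbourhoods of the `K ∩ A l` cover `K`, and a
single `g m` works for all of them.
-/

open Metric

section CoverRadius

variable {X : Type*} [PseudoMetricSpace X] {𝒰 : Set (Set X)}

noncomputable def coverRadius (𝒰 : Set (Set X)) (x : X) : ℝ :=
  sSup {r | 0 < r ∧ r ≤ 1 ∧ ∃ U ∈ 𝒰, ball x r ⊆ U}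

lemma IsOpenCover.exists_ball_subset (h𝒰 : IsOpenCover 𝒰) (x : X) :
    ∃ r, 0 < r ∧ r ≤ 1 ∧ ∃ U ∈ 𝒰, ball x r ⊆ U := by
  obtain ⟨U, hU, hxU⟩ : x ∈ ⋃₀ 𝒰 := h𝒰.2 ▸ mem_univ x
  obtain ⟨ε, hε, hball⟩ := Metric.isOpen_iff.1 (h𝒰.1 U hU) x hxU
  exact ⟨min ε 1, lt_min hε one_pos, min_le_right _ _, U, hU,
    (ball_subset_ball (min_le_left _ _)).trans hball⟩

lemma le_coverRadius {x : X} {r : ℝ} {U : Set X} (hr : 0 < r) (hr₁ : r ≤ 1) (hU : U ∈ 𝒰)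
    (hball : ball x r ⊆ U) : r ≤ coverRadius 𝒰 x :=
  le_csSup ⟨1, fun _ hs => hs.2.1⟩ ⟨hr, hr₁, U, hU, hball⟩

lemma coverRadius_pos (h𝒰 : IsOpenCover 𝒰) (x : X) : 0 < coverRadius 𝒰 x := by
  obtain ⟨r, hr, hr₁, U, hU, hball⟩ := h𝒰.exists_ball_subset x
  exact hr.trans_le (le_coverRadius hr hr₁ hU hball)

lemma coverRadius_le_one (h𝒰 : IsOpenCover 𝒰) (x : X) : coverRadius 𝒰 x ≤ 1 :=
  csSup_le (h𝒰.exists_ball_subset x) fun _ hr => hr.2.1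

lemma coverRadius_le_add_dist (h𝒰 : IsOpenCover 𝒰) (x y : X) :
    coverRadius 𝒰 x ≤ coverRadius 𝒰 y + dist x y := by
  refine csSup_le (h𝒰.exists_ball_subset x) fun r ⟨hr, hr₁, U, hU, hball⟩ => ?_
  rcases le_or_gt r (dist x y) with hle | hlt
  · linarith [coverRadius_pos h𝒰 y]
  · have hsub : ball y (r - dist x y) ⊆ U := fun z hz => hball <| by
      rw [mem_ball] at hz ⊢
      linarith [dist_triangle z y x, dist_comm x y]
    linarith [le_coverRadius (sub_pos.2 hlt) (by linarith [dist_nonneg (x := x) (y := y)]) hU hsub]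

lemma exists_mem_of_dist_lt_coverRadius (h𝒰 : IsOpenCover 𝒰) {x y : X}
    (h : dist y x < coverRadius 𝒰 x) : ∃ U ∈ 𝒰, y ∈ U ∧ x ∈ U := by
  obtain ⟨r, ⟨hr, -, U, hU, hball⟩, hyr⟩ := exists_lt_of_lt_csSup (h𝒰.exists_ball_subset x) h
  exact ⟨U, hU, hball (mem_ball.2 hyr), hball (mem_ball_self hr)⟩

end CoverRadius

section PushOff

variable {X : Type*} [PseudoMetricSpace X] {n : ℕ}

lemma IsStrongZSet.exists_dist_lt {B : Set X} (hB : IsStrongZSet n B) {δ : X → ℝ}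
    (hδ : Continuous δ) (hδ₀ : ∀ x, 0 < δ x) :
    ∃ h : C(X, X), (∀ x, dist (h x) x < δ x) ∧ closure (range h) ∩ B = ∅ := by
  -- two points of `V y` are less than `δ y / 2` apart, and `δ y / 2` is below `δ` on `V y`
  let V : X → Set X := fun y => ball y (δ y / 4) ∩ {x | δ y < 2 * δ x}
  have hV : IsOpenCover (range V) := by
    refine ⟨?_, eq_univ_of_forall fun y => ⟨V y, mem_range_self y, ?_, ?_⟩⟩
    · rintro _ ⟨y, rfl⟩
      exact isOpen_ball.inter (isOpen_lt continuous_const (continuous_const.mul hδ))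
    · exact mem_ball_self (by linarith [hδ₀ y])
    · show δ y < 2 * δ y
      linarith [hδ₀ y]
  obtain ⟨h, hclose, hmiss⟩ := hB.2 _ hV
  refine ⟨h, fun x => ?_, hmiss⟩
  obtain ⟨_, ⟨y, rfl⟩, ⟨hhx, -⟩, hx, hδx⟩ := hclose x
  have hx : dist x y < δ y / 4 := hx
  have hδx : δ y < 2 * δ x := hδx
  rw [mem_ball] at hhx
  linarith [dist_triangle_right (h x) x y]

lemma IsStrongZSet.exists_dist_lt_of_isCompact {B : Set X} (hB : IsStrongZSet n B)
    {δ : X → ℝ} (hδ : Continuous δ) (hδ₀ : ∀ x, 0 < δ x) {K : Set X} (hK : IsCompact K) :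
    ∃ h : C(X, X), (∀ x, dist (h x) x < δ x) ∧ ∃ e > 0, ∀ x, ∀ p ∈ K ∩ B, e ≤ dist (h x) p := by
  obtain ⟨h, hclose, hmiss⟩ := hB.exists_dist_lt hδ hδ₀
  have hsub : K ∩ B ⊆ (closure (range h))ᶜ := fun p hp hp' => hmiss.subset ⟨hp', hp.2⟩
  obtain ⟨e, he, hthick⟩ :=
    (hK.inter_right hB.1).exists_thickening_subset_open isClosed_closure.isOpen_compl hsub
  exact ⟨h, hclose, e, he, fun x p hp => not_lt.1 fun hlt =>
    hthick (mem_thickening_iff.2 ⟨p, hp, hlt⟩) (subset_closure (mem_range_self x))⟩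

lemma exists_seq_pushOff {A : ℕ → Set X} (hZ : ∀ i, IsStrongZSet n (A i)) {K : Set X}
    (hK : IsCompact K) {ρ : X → ℝ} (hρ : Continuous ρ) (hρ₀ : ∀ x, 0 < ρ x) {c₀ : ℝ}
    (hc₀ : 0 < c₀) :
    ∃ (h : ℕ → C(X, X)) (c : ℕ → ℝ), c 0 = c₀ ∧ ∀ i, 0 < c i ∧ c (i + 1) ≤ c i / 2 ∧
      (∀ x, dist (h i x) x ≤ c i * ρ x) ∧ ∀ x, ∀ p ∈ K ∩ A i, 4 * c (i + 1) ≤ dist (h i x) p := by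
  choose h hclose e he hfar using fun i (c : {c : ℝ // 0 < c}) =>
    (hZ i).exists_dist_lt_of_isCompact (δ := fun x => c * ρ x) (continuous_const.mul hρ)
      (fun x => mul_pos c.2 (hρ₀ x)) hK
  let c : ℕ → {c : ℝ // 0 < c} := fun m => Nat.rec ⟨c₀, hc₀⟩
    (fun i ci => ⟨min (ci / 2) (e i ci / 4), lt_min (half_pos ci.2) (by linarith [he i ci])⟩) m
  refine ⟨fun i => h i (c i), fun i => (c i).1, rfl, fun i =>
    ⟨(c i).2, min_le_left _ _, fun x => (hclose i (c i) x).le, fun x p hp => ?_⟩⟩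
  have hnext : (c (i + 1) : ℝ) ≤ e i (c i) / 4 := min_le_right _ _
  linarith [hfar i (c i) x p hp]

end PushOff

section Orbits

variable {X : Type*} [PseudoMetricSpace X] {u : ℕ → X}

lemma dist_le_sub_of_forall_dist_succ_le {a : ℕ → ℝ}
    (h : ∀ j, dist (u (j + 1)) (u j) ≤ a j - a (j + 1)) {k m : ℕ} (hkm : k ≤ m) :
    dist (u m) (u k) ≤ a k - a m := by
  induction m, hkm using Nat.le_induction with
  | base => simp
  | succ m _ ih => linarith [dist_triangle (u (m + 1)) (u m) (u k), h m]

lemma dist_le_of_forall_dist_succ_le_mul {ρ : X → ℝ} (hρ : ∀ x y, ρ x ≤ ρ y + dist x y)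
    (hρ₀ : 0 ≤ ρ (u 0)) {c : ℕ → ℝ} (hc : ∀ j, 0 ≤ c j) (hc₀ : c 0 ≤ 1 / 6)
    (hcs : ∀ j, c (j + 1) ≤ c j / 2) (hu : ∀ j, dist (u (j + 1)) (u j) ≤ c j * ρ (u j))
    (m : ℕ) : dist (u m) (u 0) ≤ 3 * (c 0 - c m) * ρ (u 0) := by
  induction m with
  | zero => simp
  | succ m ih =>
    have hρm : ρ (u m) ≤ ρ (u 0) + dist (u m) (u 0) := hρ _ _
    have hsmall : dist (u m) (u 0) ≤ ρ (u 0) / 2 := by nlinarith [hc m]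
    have hstep : dist (u (m + 1)) (u m) ≤ 3 / 2 * c m * ρ (u 0) := by
      nlinarith [hu m, hc m]
    nlinarith [dist_triangle (u (m + 1)) (u m) (u 0), hcs m]

end Orbits

lemma IsCompact.exists_disjoint_closure {X : Type*} [TopologicalSpace X] {K : Set X}
    (hK : IsCompact K) {W S : ℕ → Set X} (hW : ∀ l, IsOpen (W l)) (hKW : K ⊆ ⋃ l, W l)
    (hWS : ∀ l m, l < m → Disjoint (W l) (S m)) : ∃ m, Disjoint (closure (S m)) K := by
  obtain ⟨t, ht⟩ := hK.elim_finite_subcover W hW hKW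
  refine ⟨t.sup id + 1, disjoint_right.2 fun y hyK hy => ?_⟩
  obtain ⟨l, hl, hyl⟩ := mem_iUnion₂.1 (ht hyK)
  have hlt : l < t.sup id + 1 := Nat.lt_succ_of_le (Finset.le_sup (f := id) hl)
  exact disjoint_left.1 ((hWS l _ hlt).closure_right (hW l)) hyl hy

def compSeq {X : Type*} [TopologicalSpace X] (h : ℕ → C(X, X)) : ℕ → C(X, X)
  | 0 => ContinuousMap.id X
  | m + 1 => (h m).comp (compSeq h m)

theorem IsCompact.isStrongZSet_of_iUnion_eq_univ {X : Type*} [MetricSpace X] {n : ℕ}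
    {A : ℕ → Set X} (hcov : ⋃ i, A i = univ) (hZ : ∀ i, IsStrongZSet n (A i)) {K : Set X}
    (hK : IsCompact K) : IsStrongZSet n K := by
  refine ⟨hK.isClosed, fun 𝒰 h𝒰 => ?_⟩
  have hρ := coverRadius_pos h𝒰
  obtain ⟨h, c, hc₀, hc⟩ := exists_seq_pushOff hZ hK
    (LipschitzWith.of_le_add (coverRadius_le_add_dist h𝒰)).continuous hρ (c₀ := 1 / 8)
    (by norm_num)
  let g := compSeq h
  have hstep : ∀ x j, dist (g (j + 1) x) (g j x) ≤ c j * coverRadius 𝒰 (g j x) :=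
    fun x j => (hc j).2.2.1 _
  have hnear : ∀ m x, dist (g m x) x < coverRadius 𝒰 x := fun m x => by
    have hdist : dist (g m x) x ≤ 3 * (c 0 - c m) * coverRadius 𝒰 x :=
      dist_le_of_forall_dist_succ_le_mul (u := (g · x)) (coverRadius_le_add_dist h𝒰)
        (hρ x).le (fun j => (hc j).1.le) (by norm_num [hc₀]) (fun j => (hc j).2.1) (hstep x) m
    rw [hc₀] at hdist
    nlinarith [hρ x, (hc m).1]
  have htail : ∀ x k m, k ≤ m → dist (g m x) (g k x) ≤ 2 * c k - 2 * c m := fun x _ _ =>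
    dist_le_sub_of_forall_dist_succ_le (u := (g · x)) (a := (2 * c ·)) fun j => by
      nlinarith [hstep x j, coverRadius_le_one h𝒰 (g j x), (hc j).1, (hc j).2.1]
  have hfar : ∀ l m, l < m → Disjoint (thickening (2 * c (l + 1)) (K ∩ A l)) (range (g m)) := by
    refine fun l m hlm => disjoint_left.2 ?_
    rintro _ hy ⟨x, rfl⟩
    obtain ⟨p, hp, hdist⟩ := mem_thickening_iff.1 hy
    have hpushed : 4 * c (l + 1) ≤ dist (g (l + 1) x) p := (hc l).2.2.2 (g l x) p hp
    linarith [htail x (l + 1) m hlm, (hc m).1,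
      dist_triangle (g (l + 1) x) (g m x) p, dist_comm (g (l + 1) x) (g m x)]
  have hKW : K ⊆ ⋃ l, thickening (2 * c (l + 1)) (K ∩ A l) := fun k hk => by
    obtain ⟨i, hi⟩ := mem_iUnion.1 (hcov ▸ mem_univ k)
    exact mem_iUnion.2 ⟨i, self_subset_thickening (by linarith [(hc (i + 1)).1]) _ ⟨hk, hi⟩⟩
  obtain ⟨m, hm⟩ := hK.exists_disjoint_closure (fun _ => isOpen_thickening) hKW hfar
  exact ⟨g m, fun x => exists_mem_of_dist_lt_coverRadius h𝒰 (hnear m x),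
    disjoint_iff_inter_eq_empty.1 hm⟩

theorem statement8_general (n : ℕ) (X : Type) [TopologicalSpace X] [MetrizableSpace X]
    (A : ℕ → Set X) (hcov : (⋃ i, A i) = Set.univ) (hZ : ∀ i, IsStrongZSet n (A i))
    (K : Set X) (hK : IsCompact K) : IsStrongZSet n K := by
  let : MetricSpace X := TopologicalSpace.metrizableSpaceMetric X
  exact hK.isStrongZSet_of_iUnion_eq_univ hcov hZ

theorem statement8 (n : ℕ) (X : Type) [TopologicalSpace X] [MetrizableSpace X]
    [SeparableSpace X] (hdim : CovDimLE X n) (hLC : IsLCUpTo n X)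
    (A : ℕ → Set X) (hcov : (⋃ i, A i) = Set.univ) (hZ : ∀ i, IsStrongZSet n (A i))
    (K : Set X) (hK : IsCompact K) : IsStrongZSet n K :=
  statement8_general n X A hcov hZ K hK
end

section
/- Let n ≥ 0 and let X be a separable metrizable space of covering dimension at most n which is LC^{n-1}. If X = ⋃_{i∈ℕ} X_i where each X_i is a strong Z-set in X, then X satisfies the discrete n-cells property. -/
open Set Topology TopologicalSpace

namespace ZProof

open Metric

variable {X : Type} [MetricSpace X]

noncomputable def lam (𝒰 : Set (Set X)) (y : X) : ℝ :=
  sSup {r : ℝ | 0 ≤ r ∧ r ≤ 1 ∧ ∃ U ∈ 𝒰, Metric.ball y r ⊆ U}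

lemma lamSet_nonempty {𝒰 : Set (Set X)} (hne : ∃ U, U ∈ 𝒰) (y : X) :
    {r : ℝ | 0 ≤ r ∧ r ≤ 1 ∧ ∃ U ∈ 𝒰, Metric.ball y r ⊆ U}.Nonempty := by
  obtain ⟨U, hU⟩ := hne
  exact ⟨0, le_refl _, zero_le_one, U, hU, by simp⟩

lemma lamSet_bdd (𝒰 : Set (Set X)) (y : X) :
    BddAbove {r : ℝ | 0 ≤ r ∧ r ≤ 1 ∧ ∃ U ∈ 𝒰, Metric.ball y r ⊆ U} :=
  ⟨1, fun r hr => hr.2.1⟩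

lemma lam_nonneg {𝒰 : Set (Set X)} (hne : ∃ U, U ∈ 𝒰) (y : X) : 0 ≤ lam 𝒰 y := by
  obtain ⟨U, hU⟩ := hne
  exact le_csSup (lamSet_bdd 𝒰 y) ⟨le_refl _, zero_le_one, U, hU, by simp⟩

lemma lam_le_one {𝒰 : Set (Set X)} (hne : ∃ U, U ∈ 𝒰) (y : X) : lam 𝒰 y ≤ 1 :=
  csSup_le (lamSet_nonempty hne y) (fun r hr => hr.2.1)

lemma lam_pos {𝒰 : Set (Set X)} (hU : IsOpenCover 𝒰) (y : X) : 0 < lam 𝒰 y := by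
  have hy : y ∈ ⋃₀ 𝒰 := hU.2.symm ▸ Set.mem_univ y
  obtain ⟨U, hUm, hyU⟩ := hy
  obtain ⟨ε, hε, hball⟩ := Metric.isOpen_iff.1 (hU.1 U hUm) y hyU
  have h1 : min ε 1 ≤ lam 𝒰 y := by
    apply le_csSup (lamSet_bdd 𝒰 y)
    exact ⟨le_of_lt (lt_min hε one_pos), min_le_right _ _, U, hUm,
      (Metric.ball_subset_ball (min_le_left _ _)).trans hball⟩
  exact lt_of_lt_of_le (lt_min hε one_pos) h1

lemma lam_lip {𝒰 : Set (Set X)} (hne : ∃ U, U ∈ 𝒰) (y z : X) :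
    lam 𝒰 y ≤ lam 𝒰 z + dist y z := by
  apply csSup_le (lamSet_nonempty hne y)
  intro r hr
  obtain ⟨hr0, hr1, U, hUm, hball⟩ := hr
  rcases le_or_gt r (dist y z) with h | h
  · have := lam_nonneg hne z; linarith
  · have : r - dist y z ≤ lam 𝒰 z := by
      apply le_csSup (lamSet_bdd 𝒰 z)
      refine ⟨by linarith, by linarith [dist_nonneg (x := y) (y := z)], U, hUm, ?_⟩
      intro u hu
      apply hball
      have h1 : dist u z < r - dist y z := hu
      show dist u y < r
      calc dist u y ≤ dist u z + dist z y := dist_triangle u z y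
      _ < (r - dist y z) + dist z y := by linarith
      _ = r := by rw [dist_comm z y]; ring
    linarith

lemma lam_ball {𝒰 : Set (Set X)} (hU : IsOpenCover 𝒰) (y : X) :
    ∃ U ∈ 𝒰, Metric.ball y (lam 𝒰 y / 2) ⊆ U := by
  have hy : y ∈ ⋃₀ 𝒰 := hU.2.symm ▸ Set.mem_univ y
  obtain ⟨U0, hU0, _⟩ := hy
  have hne : ∃ U, U ∈ 𝒰 := ⟨U0, hU0⟩
  have hpos := lam_pos hU y
  have hlt : lam 𝒰 y / 2 < lam 𝒰 y := by linarith
  obtain ⟨r, hr, hrlt⟩ := exists_lt_of_lt_csSup (lamSet_nonempty hne y) hlt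
  obtain ⟨hr0, hr1, U, hUm, hball⟩ := hr
  exact ⟨U, hUm, (Metric.ball_subset_ball (le_of_lt hrlt)).trans hball⟩

/-! ### compositions -/

def psi (φ : ℕ → C(X, X)) (i : ℕ) : ℕ → X → X
  | 0 => id
  | (m+1) => if m + 1 ≤ i then id else ⇑(φ (m+1)) ∘ psi φ i m

def hmap (φ : ℕ → C(X, X)) : ℕ → X → X
  | 0 => ⇑(φ 0)
  | (m+1) => ⇑(φ (m+1)) ∘ hmap φ m

lemma psi_of_le (φ : ℕ → C(X, X)) {i m : ℕ} (h : m ≤ i) : psi φ i m = id := by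
  cases m with
  | zero => simp [psi]
  | succ m => simp [psi, h]

lemma psi_succ (φ : ℕ → C(X, X)) {i m : ℕ} (h : i ≤ m) :
    psi φ i (m+1) = ⇑(φ (m+1)) ∘ psi φ i m := by
  have : ¬ (m + 1 ≤ i) := by omega
  simp [psi, this]

lemma hmap_continuous (φ : ℕ → C(X, X)) (m : ℕ) : Continuous (hmap φ m) := by
  induction m with
  | zero => exact (φ 0).continuous
  | succ m ih => exact (φ (m+1)).continuous.comp ih

lemma hmap_mem_range (φ : ℕ → C(X, X)) (i : ℕ) (z : X) :
    hmap φ i z ∈ Set.range ⇑(φ i) := by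
  cases i with
  | zero => exact ⟨z, rfl⟩
  | succ m => exact ⟨hmap φ m z, rfl⟩

lemma hmap_eq_psi (φ : ℕ → C(X, X)) {i m : ℕ} (h : i ≤ m) (z : X) :
    hmap φ m z = psi φ i m (hmap φ i z) := by
  induction m with
  | zero =>
    have : i = 0 := Nat.le_zero.1 h
    subst this; rw [psi_of_le φ (le_refl 0)]; rfl
  | succ m ih =>
    rcases Nat.lt_or_ge i (m+1) with h1 | h1
    · have h2 : i ≤ m := by omega
      rw [psi_succ φ h2]
      show ⇑(φ (m+1)) (hmap φ m z) = (⇑(φ (m+1)) ∘ psi φ i m) (hmap φ i z)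
      rw [ih h2]; rfl
    · have : i = m + 1 := by omega
      subst this
      rw [psi_of_le φ (le_refl _)]; rfl

def Qset (φ : ℕ → C(X, X)) (i m : ℕ) : Set X := psi φ i m '' Set.range ⇑(φ i)

lemma psi_congr {φ φ' : ℕ → C(X, X)} {m : ℕ} (h : ∀ j ≤ m, φ j = φ' j) (i : ℕ) :
    psi φ i m = psi φ' i m := by
  induction m with
  | zero => rfl
  | succ m ih =>
    have hm : ∀ j ≤ m, φ j = φ' j := fun j hj => h j (by omega)
    by_cases hc : m + 1 ≤ i
    · simp [psi, hc]
    · simp only [psi, if_neg hc, ih hm, h (m+1) (le_refl _)]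

lemma Qset_congr {φ φ' : ℕ → C(X, X)} {m : ℕ} (h : ∀ j ≤ m, φ j = φ' j) {i : ℕ}
    (hi : i ≤ m) : Qset φ i m = Qset φ' i m := by
  unfold Qset
  rw [psi_congr h, h i hi]

/-! ### the covers -/

def memA (𝒰 : Set (Set X)) (m : ℕ) : Set (Set X) :=
  {s | ∃ y : X, s = Metric.ball y ((1/2 : ℝ)^m * lam 𝒰 y / 32)}

def memB (A : ℕ → Set X) (φ : ℕ → C(X, X)) (i m : ℕ) : Set (Set X) :=
  {s | (∃ y : X, s = Metric.ball y ((1/2 : ℝ)^(m-i) * Metric.infDist y (A i) / 8)) ∨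
    s = (closure (Qset φ i (m-1)))ᶜ ∨ (A i = ∅ ∧ s = Set.univ)}

def Good' (A : ℕ → Set X) (φ : ℕ → C(X, X)) (m : ℕ) : Prop :=
  ∀ i < m, closure (Qset φ i (m-1)) ∩ A i = ∅

def realCov (𝒰 : Set (Set X)) (A : ℕ → Set X) (φ : ℕ → C(X, X)) (m : ℕ) : Set (Set X) :=
  {s | ∃ W : ℕ → Set X, W 0 ∈ memA 𝒰 m ∧ (∀ i, i < m → W (i+1) ∈ memB A φ i m) ∧
    s = ⋂ j ∈ Finset.range (m+1), W j}

noncomputable def cov (𝒰 : Set (Set X)) (A : ℕ → Set X) (φ : ℕ → C(X, X)) (m : ℕ) :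
    Set (Set X) :=
  @ite _ (Good' A φ m) (Classical.propDecidable _) (realCov 𝒰 A φ m) {Set.univ}

lemma cov_isOpenCover {𝒰 : Set (Set X)} (hU : IsOpenCover 𝒰) (A : ℕ → Set X)
    (hA : ∀ i, IsClosed (A i)) (φ : ℕ → C(X, X)) (m : ℕ) : IsOpenCover (cov 𝒰 A φ m) := by
  unfold cov
  split_ifs with hG
  · constructor
    · rintro s ⟨W, hW0, hWB, rfl⟩
      apply isOpen_biInter_finset
      intro j hj
      rcases Nat.eq_zero_or_pos j with rfl | hjpos
      · obtain ⟨y, hy⟩ := hW0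
        rw [hy]; exact Metric.isOpen_ball
      · obtain ⟨i, rfl⟩ := Nat.exists_eq_add_of_lt hjpos
        simp only [Nat.zero_add] at *
        have hi : i < m := by
          have := Finset.mem_range.1 hj; omega
        rcases hWB i hi with ⟨y, hy⟩ | hy | ⟨_, hy⟩ <;> rw [hy]
        · exact Metric.isOpen_ball
        · exact isClosed_closure.isOpen_compl
        · exact isOpen_univ
    · apply Set.eq_univ_of_forall
      intro x
      classical
      set W : ℕ → Set X := fun j =>
        Nat.casesOn j (Metric.ball x ((1/2 : ℝ)^m * lam 𝒰 x / 32))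
          (fun i => if hA0 : A i = ∅ then Set.univ else
            if x ∈ A i then (closure (Qset φ i (m-1)))ᶜ
            else Metric.ball x ((1/2 : ℝ)^(m-i) * Metric.infDist x (A i) / 8)) with hW
      refine ⟨⋂ j ∈ Finset.range (m+1), W j, ⟨W, ⟨x, rfl⟩, ?_, rfl⟩, ?_⟩
      · intro i hi
        show W (i+1) ∈ memB A φ i m
        simp only [hW]
        split_ifs with h1 h2
        · exact Or.inr (Or.inr ⟨h1, rfl⟩)
        · exact Or.inr (Or.inl rfl)
        · exact Or.inl ⟨x, rfl⟩
      · apply Set.mem_biInter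
        intro j hj
        rcases Nat.eq_zero_or_pos j with rfl | hjpos
        · show x ∈ Metric.ball x _
          apply Metric.mem_ball_self
          have := lam_pos hU x
          positivity
        · obtain ⟨i, rfl⟩ := Nat.exists_eq_add_of_lt hjpos
          simp only [Nat.zero_add] at *
          have hi : i < m := by
            have := Finset.mem_range.1 hj; omega
          show x ∈ (if hA0 : A i = ∅ then Set.univ else
            if x ∈ A i then (closure (Qset φ i (m-1)))ᶜ
            else Metric.ball x ((1/2 : ℝ)^(m-i) * Metric.infDist x (A i) / 8))
          split_ifs with h1 h2
          · trivial
          · intro hx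
            have := hG i hi
            exact absurd (Set.mem_inter hx h2) (by rw [this]; exact fun h => h)
          · apply Metric.mem_ball_self
            have hpos : 0 < Metric.infDist x (A i) :=
              ((hA i).notMem_iff_infDist_pos (Set.nonempty_iff_ne_empty.2 h1)).1 h2
            positivity
  · constructor
    · rintro s rfl
      exact isOpen_univ
    · simp

lemma Good'_congr {A : ℕ → Set X} {φ φ' : ℕ → C(X, X)} {m : ℕ}
    (h : ∀ j < m, φ j = φ' j) : Good' A φ m = Good' A φ' m := by
  cases m with
  | zero =>
    apply propext
    constructor <;> intro _ i hi <;> omega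
  | succ m =>
    have hq : ∀ i, i < m + 1 → Qset φ i (m + 1 - 1) = Qset φ' i (m + 1 - 1) := by
      intro i hi
      exact Qset_congr (fun j hj => h j (by omega)) (by omega)
    apply propext
    constructor
    · intro hG i hi; rw [← hq i hi]; exact hG i hi
    · intro hG i hi; rw [hq i hi]; exact hG i hi

lemma memB_congr {A : ℕ → Set X} {φ φ' : ℕ → C(X, X)} {m i : ℕ}
    (h : ∀ j < m, φ j = φ' j) (hi : i < m) : memB A φ i m = memB A φ' i m := by
  unfold memB
  rw [Qset_congr (fun j hj => h j (by omega)) (by omega : i ≤ m - 1)]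

lemma realCov_congr {𝒰 : Set (Set X)} {A : ℕ → Set X} {φ φ' : ℕ → C(X, X)} {m : ℕ}
    (h : ∀ j < m, φ j = φ' j) : realCov 𝒰 A φ m = realCov 𝒰 A φ' m := by
  unfold realCov
  ext s
  constructor
  · rintro ⟨W, hW0, hWB, rfl⟩
    exact ⟨W, hW0, fun i hi => (memB_congr h hi) ▸ hWB i hi, rfl⟩
  · rintro ⟨W, hW0, hWB, rfl⟩
    exact ⟨W, hW0, fun i hi => (memB_congr h hi).symm ▸ hWB i hi, rfl⟩

lemma cov_congr {𝒰 : Set (Set X)} {A : ℕ → Set X} {φ φ' : ℕ → C(X, X)} {m : ℕ}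
    (h : ∀ j < m, φ j = φ' j) : cov 𝒰 A φ m = cov 𝒰 A φ' m := by
  unfold cov
  rw [Good'_congr h, realCov_congr h]

variable (n : ℕ) (A : ℕ → Set X) (𝒰 : Set (Set X))

noncomputable def nextMap (hZ : ∀ i, IsStrongZSet n (A i)) (hU : IsOpenCover 𝒰)
    (pr : ℕ → C(X, X)) (m : ℕ) : C(X, X) :=
  Classical.choose ((hZ m).2 (cov 𝒰 A pr m)
    (cov_isOpenCover hU A (fun i => (hZ i).1) pr m))

noncomputable def prefSeq (hZ : ∀ i, IsStrongZSet n (A i)) (hU : IsOpenCover 𝒰) :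
    ℕ → ℕ → C(X, X)
  | 0 => fun _ => ContinuousMap.id X
  | (m+1) => fun j => if j = m then nextMap n A 𝒰 hZ hU (prefSeq hZ hU m) m
      else prefSeq hZ hU m j

noncomputable def phi (hZ : ∀ i, IsStrongZSet n (A i)) (hU : IsOpenCover 𝒰) (m : ℕ) :
    C(X, X) := prefSeq n A 𝒰 hZ hU (m+1) m

lemma prefSeq_eq_phi (hZ : ∀ i, IsStrongZSet n (A i)) (hU : IsOpenCover 𝒰) :
    ∀ m j, j < m → prefSeq n A 𝒰 hZ hU m j = phi n A 𝒰 hZ hU j := by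
  intro m
  induction m with
  | zero => intro j h; omega
  | succ m ih =>
    intro j hj
    by_cases h : j = m
    · subst h; rfl
    · have hj' : j < m := by omega
      show (if j = m then _ else prefSeq n A 𝒰 hZ hU m j) = _
      rw [if_neg h]
      exact ih j hj'

lemma phi_spec (hZ : ∀ i, IsStrongZSet n (A i)) (hU : IsOpenCover 𝒰) (m : ℕ) :
    UClose (cov 𝒰 A (phi n A 𝒰 hZ hU) m) ⇑(phi n A 𝒰 hZ hU m) id ∧
      closure (Set.range ⇑(phi n A 𝒰 hZ hU m)) ∩ A m = ∅ := by
  have hs := Classical.choose_spec ((hZ m).2 (cov 𝒰 A (prefSeq n A 𝒰 hZ hU m) m)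
    (cov_isOpenCover hU A (fun i => (hZ i).1) _ m))
  have hcov : cov 𝒰 A (prefSeq n A 𝒰 hZ hU m) m = cov 𝒰 A (phi n A 𝒰 hZ hU) m :=
    cov_congr (fun j hj => prefSeq_eq_phi n A 𝒰 hZ hU m j hj)
  have he : phi n A 𝒰 hZ hU m = nextMap n A 𝒰 hZ hU (prefSeq n A 𝒰 hZ hU m) m := by
    show prefSeq n A 𝒰 hZ hU (m+1) m = _
    simp [prefSeq]
  rw [he]
  unfold nextMap
  rw [← hcov]
  exact hs


lemma exists_mem_of_cover {𝒰 : Set (Set X)} [Nonempty X] (hU : IsOpenCover 𝒰) :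
    ∃ U, U ∈ 𝒰 := by
  have hx : (Classical.arbitrary X) ∈ ⋃₀ 𝒰 := by rw [hU.2]; trivial
  obtain ⟨U, hUm, _⟩ := hx
  exact ⟨U, hUm⟩

theorem chain_main [Nonempty X] (hZ : ∀ i, IsStrongZSet n (A i)) (hU : IsOpenCover 𝒰) :
    ∀ m : ℕ,
    (∀ i, i ≤ m → (A i).Nonempty → ∀ p ∈ Set.range ⇑(phi n A 𝒰 hZ hU i),
      dist (psi (phi n A 𝒰 hZ hU) i m p) p ≤
        (2/5 : ℝ) * (1 - (1/2 : ℝ)^(m-i)) * Metric.infDist p (A i)) ∧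
    Good' A (phi n A 𝒰 hZ hU) (m+1) := by
  set Φ := phi n A 𝒰 hZ hU with hΦ
  have derive : ∀ m, (∀ i, i ≤ m → (A i).Nonempty → ∀ p ∈ Set.range ⇑(Φ i),
      dist (psi Φ i m p) p ≤ (2/5 : ℝ) * (1 - (1/2 : ℝ)^(m-i)) * Metric.infDist p (A i)) →
      Good' A Φ (m+1) := by
    intro m hm i hi
    rw [Nat.add_sub_cancel]
    by_contra hne
    obtain ⟨z, hzc, hzA⟩ := Set.nonempty_iff_ne_empty.2 hne
    have hAne : (A i).Nonempty := ⟨z, hzA⟩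
    have hiM : i ≤ m := by omega
    have hzr : z ∉ closure (Set.range ⇑(Φ i)) := by
      intro hz
      have hspec := (phi_spec n A 𝒰 hZ hU i).2
      exact absurd (Set.mem_inter hz hzA) (by rw [hspec]; exact id)
    have hrne : (Set.range ⇑(Φ i)).Nonempty := Set.range_nonempty _
    have hIpos : 0 < Metric.infDist z (Set.range ⇑(Φ i)) := by
      rw [← Metric.infDist_closure]
      exact (isClosed_closure.notMem_iff_infDist_pos hrne.closure).1 hzr
    set I := Metric.infDist z (Set.range ⇑(Φ i)) with hI
    obtain ⟨q, hq, hdq⟩ := Metric.mem_closure_iff.1 hzc ((3/5) * I) (by positivity)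
    obtain ⟨p, hp, rfl⟩ := hq
    have h1 : dist (psi Φ i m p) p ≤
        (2/5 : ℝ) * (1 - (1/2 : ℝ)^(m-i)) * Metric.infDist p (A i) := hm i hiM hAne p hp
    have h2 : Metric.infDist p (A i) ≤ dist p z := Metric.infDist_le_dist_of_mem hzA
    have h3 : I ≤ dist z p := Metric.infDist_le_dist_of_mem hp
    have h4 : dist z p ≤ dist z (psi Φ i m p) + dist (psi Φ i m p) p :=
      dist_triangle _ _ _
    have hpow0 : (0:ℝ) ≤ (1/2 : ℝ)^(m-i) := by positivity
    have hpow1 : (1/2 : ℝ)^(m-i) ≤ 1 := by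
      apply pow_le_one₀ <;> norm_num
    have hd0 : (0:ℝ) ≤ Metric.infDist p (A i) := Metric.infDist_nonneg
    have hcomm : dist p z = dist z p := dist_comm p z
    nlinarith [hdq]
  intro m
  induction m with
  | zero =>
    have h0 : ∀ i, i ≤ 0 → (A i).Nonempty → ∀ p ∈ Set.range ⇑(Φ i),
        dist (psi Φ i 0 p) p ≤
          (2/5 : ℝ) * (1 - (1/2 : ℝ)^(0-i)) * Metric.infDist p (A i) := by
      intro i hi _ p _
      have : i = 0 := by omega
      subst this
      rw [psi_of_le Φ (le_refl 0)]
      simp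
    exact ⟨h0, derive 0 h0⟩
  | succ m ih =>
    obtain ⟨ihb, ihG⟩ := ih
    have hb : ∀ i, i ≤ m + 1 → (A i).Nonempty → ∀ p ∈ Set.range ⇑(Φ i),
        dist (psi Φ i (m+1) p) p ≤
          (2/5 : ℝ) * (1 - (1/2 : ℝ)^(m+1-i)) * Metric.infDist p (A i) := by
      intro i hi hAne p hp
      rcases Nat.lt_or_ge i (m+1) with hlt | hge
      · have him : i ≤ m := by omega
        set w := psi Φ i m p with hw
        have hwQ : w ∈ Qset Φ i m := ⟨p, hp, rfl⟩
        obtain ⟨s, hs, hφw, hw2⟩ := (phi_spec n A 𝒰 hZ hU (m+1)).1 w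
        unfold cov at hs
        rw [if_pos ihG] at hs
        obtain ⟨W, hW0, hWB, rfl⟩ := hs
        have hsub : (⋂ j ∈ Finset.range (m+1+1), W j) ⊆ W (i+1) :=
          Set.biInter_subset_of_mem (Finset.mem_range.2 (by omega))
        have hmem1 : (Φ (m+1)) w ∈ W (i+1) := hsub hφw
        have hmem2 : w ∈ W (i+1) := hsub hw2
        rw [psi_succ Φ him]
        simp only [Function.comp_apply, ← hw]
        rcases hWB i hlt with ⟨y, hy⟩ | hy | ⟨hAe, _⟩
        · rw [hy, Metric.mem_ball] at hmem1 hmem2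
          have hexp : m + 1 - i = (m - i) + 1 := by omega
          rw [hexp] at hmem1 hmem2 ⊢
          rw [pow_succ] at hmem1 hmem2 ⊢
          set e := (1/2 : ℝ)^(m-i) with he
          have he0 : (0:ℝ) ≤ e := by positivity
          have he1 : e ≤ 1 := by apply pow_le_one₀ <;> norm_num
          set D := Metric.infDist p (A i) with hD
          have hD0 : (0:ℝ) ≤ D := Metric.infDist_nonneg
          have hIH : dist w p ≤ (2/5 : ℝ) * (1 - e) * D := ihb i him hAne p hp
          set dy := Metric.infDist y (A i) with hdy
          have hdy0 : (0:ℝ) ≤ dy := Metric.infDist_nonneg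
          have hdw : Metric.infDist w (A i) ≤ D + dist w p :=
            Metric.infDist_le_infDist_add_dist
          have hdyw : dy ≤ Metric.infDist w (A i) + dist y w :=
            Metric.infDist_le_infDist_add_dist
          have hiw0 : (0:ℝ) ≤ Metric.infDist w (A i) := Metric.infDist_nonneg
          have hc1 : dist y w = dist w y := dist_comm y w
          have ht : dist ((Φ (m+1)) w) p ≤ dist ((Φ (m+1)) w) y + dist y w + dist w p := by
            calc dist ((Φ (m+1)) w) p ≤ dist ((Φ (m+1)) w) y + dist y p := dist_triangle _ _ _
            _ ≤ dist ((Φ (m+1)) w) y + (dist y w + dist w p) := by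
                linarith [dist_triangle y w p]
            _ = _ := by ring
          have hdyD : dy ≤ (3/2) * D := by nlinarith
          nlinarith [mul_nonneg he0 hD0, mul_nonneg he0 hdy0]
        · rw [hy] at hmem2
          rw [Nat.add_sub_cancel] at hmem2
          exact absurd (subset_closure hwQ) hmem2
        · exact absurd hAne (by simp [hAe])
      · have : i = m + 1 := by omega
        subst this
        rw [psi_of_le Φ (le_refl _)]
        simp
    exact ⟨hb, derive (m+1) hb⟩

lemma good_all [Nonempty X] (hZ : ∀ i, IsStrongZSet n (A i)) (hU : IsOpenCover 𝒰) (m : ℕ) :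
    Good' A (phi n A 𝒰 hZ hU) m := by
  cases m with
  | zero => intro i hi; omega
  | succ m => exact (chain_main n A 𝒰 hZ hU m).2

lemma infDist_range_pos [Nonempty X] (hZ : ∀ i, IsStrongZSet n (A i)) (hU : IsOpenCover 𝒰)
    {i : ℕ} {y : X} (hy : y ∈ A i) :
    0 < Metric.infDist y (Set.range ⇑(phi n A 𝒰 hZ hU i)) := by
  have hspec := (phi_spec n A 𝒰 hZ hU i).2
  have hyc : y ∉ closure (Set.range ⇑(phi n A 𝒰 hZ hU i)) := fun hc =>
    absurd (Set.mem_inter hc hy) (by rw [hspec]; exact id)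
  rw [← Metric.infDist_closure]
  exact (isClosed_closure.notMem_iff_infDist_pos (Set.range_nonempty _).closure).1 hyc

lemma psi_avoid [Nonempty X] (hZ : ∀ i, IsStrongZSet n (A i)) (hU : IsOpenCover 𝒰)
    {i m : ℕ} (him : i ≤ m) {y : X} (hy : y ∈ A i)
    (p : X) (hp : p ∈ Set.range ⇑(phi n A 𝒰 hZ hU i)) :
    (3/5 : ℝ) * Metric.infDist y (Set.range ⇑(phi n A 𝒰 hZ hU i)) ≤
      dist (psi (phi n A 𝒰 hZ hU) i m p) y := by
  set Φ := phi n A 𝒰 hZ hU with hΦ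
  have hb := (chain_main n A 𝒰 hZ hU m).1 i him ⟨y, hy⟩ p hp
  have h2 : Metric.infDist p (A i) ≤ dist p y := Metric.infDist_le_dist_of_mem hy
  have h3 : Metric.infDist y (Set.range ⇑(Φ i)) ≤ dist y p :=
    Metric.infDist_le_dist_of_mem hp
  have h4 : dist p y ≤ dist p (psi Φ i m p) + dist (psi Φ i m p) y := dist_triangle _ _ _
  have hpow0 : (0:ℝ) ≤ (1/2 : ℝ)^(m-i) := by positivity
  have hpow1 : (1/2 : ℝ)^(m-i) ≤ 1 := by apply pow_le_one₀ <;> norm_num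
  have hd0 : (0:ℝ) ≤ Metric.infDist p (A i) := Metric.infDist_nonneg
  have hc1 : dist p (psi Φ i m p) = dist (psi Φ i m p) p := dist_comm _ _
  have hc2 : dist y p = dist p y := dist_comm y p
  nlinarith

lemma hmap_dist [Nonempty X] (hZ : ∀ i, IsStrongZSet n (A i)) (hU : IsOpenCover 𝒰) :
    ∀ (m : ℕ) (z : X), dist (hmap (phi n A 𝒰 hZ hU) m z) z ≤
      (1 - (1/2 : ℝ)^(m+1)) * lam 𝒰 z / 4 := by
  set Φ := phi n A 𝒰 hZ hU with hΦ
  have hne : ∃ U, U ∈ 𝒰 := exists_mem_of_cover hU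
  intro m
  induction m with
  | zero =>
    intro z
    obtain ⟨s, hs, h1, h2⟩ := (phi_spec n A 𝒰 hZ hU 0).1 z
    unfold cov at hs
    rw [if_pos (good_all n A 𝒰 hZ hU 0)] at hs
    obtain ⟨W, hW0, hWB, rfl⟩ := hs
    have hsub : (⋂ j ∈ Finset.range (0+1), W j) ⊆ W 0 :=
      Set.biInter_subset_of_mem (Finset.mem_range.2 (by omega))
    obtain ⟨y, hy⟩ := hW0
    have hm1 : (Φ 0) z ∈ W 0 := hsub h1
    have hm2 : z ∈ W 0 := hsub h2
    rw [hy, Metric.mem_ball, pow_zero] at hm1 hm2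
    have hlip : lam 𝒰 y ≤ lam 𝒰 z + dist y z := lam_lip hne y z
    have hl0 : 0 ≤ lam 𝒰 z := lam_nonneg hne z
    have hl0y : 0 ≤ lam 𝒰 y := lam_nonneg hne y
    have hcz : dist z y = dist y z := dist_comm z y
    have ht : dist ((Φ 0) z) z ≤ dist ((Φ 0) z) y + dist z y := by
      rw [hcz]; exact dist_triangle _ _ _
    show dist ((Φ 0) z) z ≤ (1 - (1/2 : ℝ)^(0+1)) * lam 𝒰 z / 4
    nlinarith
  | succ m ih =>
    intro z
    set w := hmap Φ m z with hwdef
    have hIH := ih z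
    obtain ⟨s, hs, h1, h2⟩ := (phi_spec n A 𝒰 hZ hU (m+1)).1 w
    unfold cov at hs
    rw [if_pos (good_all n A 𝒰 hZ hU (m+1))] at hs
    obtain ⟨W, hW0, hWB, rfl⟩ := hs
    have hsub : (⋂ j ∈ Finset.range (m+1+1), W j) ⊆ W 0 :=
      Set.biInter_subset_of_mem (Finset.mem_range.2 (by omega))
    obtain ⟨y, hy⟩ := hW0
    have hm1 : (Φ (m+1)) w ∈ W 0 := hsub h1
    have hm2 : w ∈ W 0 := hsub h2
    rw [hy, Metric.mem_ball] at hm1 hm2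
    have hlipyw : lam 𝒰 y ≤ lam 𝒰 w + dist y w := lam_lip hne y w
    have hlipwz : lam 𝒰 w ≤ lam 𝒰 z + dist w z := lam_lip hne w z
    have hl0 : 0 ≤ lam 𝒰 z := lam_nonneg hne z
    have hl0y : 0 ≤ lam 𝒰 y := lam_nonneg hne y
    have hl0w : 0 ≤ lam 𝒰 w := lam_nonneg hne w
    set e := (1/2 : ℝ)^(m+1) with he
    have he0 : (0:ℝ) ≤ e := by positivity
    have he1 : e ≤ 1 := by apply pow_le_one₀ <;> norm_num
    have hcm : dist y w = dist w y := dist_comm y w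
    have ht : dist ((Φ (m+1)) w) z ≤ dist ((Φ (m+1)) w) y + dist y w + dist w z := by
      calc dist ((Φ (m+1)) w) z ≤ dist ((Φ (m+1)) w) y + dist y z := dist_triangle _ _ _
      _ ≤ dist ((Φ (m+1)) w) y + (dist y w + dist w z) := by
          linarith [dist_triangle y w z]
      _ = _ := by ring
    have hyz : lam 𝒰 y ≤ 2 * lam 𝒰 z := by nlinarith
    show dist ((Φ (m+1)) w) z ≤ (1 - (1/2 : ℝ)^(m+1+1)) * lam 𝒰 z / 4
    rw [pow_succ]
    nlinarith [mul_nonneg he0 hl0, mul_nonneg he0 hl0y]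

lemma bigavoid [Nonempty X] (hZ : ∀ i, IsStrongZSet n (A i)) (hU : IsOpenCover 𝒰)
    (hcovA : (⋃ i, A i) = Set.univ) (K : Set X) (hK : IsCompact K) :
    ∃ N : ℕ, ∃ U : Set X, K ⊆ U ∧
      ∀ m, N ≤ m → ∀ z : X, hmap (phi n A 𝒰 hZ hU) m z ∉ U := by
  set Φ := phi n A 𝒰 hZ hU with hΦ
  have hidx : ∀ y : X, ∃ i, y ∈ A i := by
    intro y
    have : y ∈ ⋃ i, A i := by rw [hcovA]; trivial
    exact Set.mem_iUnion.1 this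
  choose idx hidxs using hidx
  obtain ⟨t, ht⟩ := hK.elim_nhds_subcover'
    (fun y _ => Metric.ball y (Metric.infDist y (Set.range ⇑(Φ (idx y))) / 2))
    (fun y _ => Metric.ball_mem_nhds y
      (by have := infDist_range_pos n A 𝒰 hZ hU (hidxs y); linarith))
  refine ⟨t.sup (fun y => idx (y : X)), _, ht, ?_⟩
  intro m hm z hmem
  rw [Set.mem_iUnion] at hmem
  obtain ⟨y, hy⟩ := hmem
  rw [Set.mem_iUnion] at hy
  obtain ⟨hyt, hy⟩ := hy
  rw [Metric.mem_ball] at hy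
  have him : idx (y : X) ≤ m :=
    le_trans (Finset.le_sup (f := fun y : ↥K => idx (y : X)) hyt) hm
  rw [hmap_eq_psi Φ him z] at hy
  have hav := psi_avoid n A 𝒰 hZ hU him (hidxs (y : X)) _ (hmap_mem_range Φ (idx (y:X)) z)
  have hpos := infDist_range_pos n A 𝒰 hZ hU (hidxs (y : X))
  linarith

lemma finset_min (F : Finset ℕ) (c : ℕ → ℝ) (hc : ∀ k ∈ F, 0 < c k) :
    ∃ δ : ℝ, 0 < δ ∧ ∀ k ∈ F, δ ≤ c k := by
  classical
  induction F using Finset.induction_on with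
  | empty => exact ⟨1, one_pos, by simp⟩
  | insert a s hnotmem ih =>
    obtain ⟨δ, hδ, hb⟩ := ih (fun k hk => hc k (Finset.mem_insert_of_mem hk))
    refine ⟨min δ (c a), lt_min hδ (hc a (Finset.mem_insert_self a s)), ?_⟩
    intro k hk
    rcases Finset.mem_insert.1 hk with rfl | hk
    · exact min_le_right _ _
    · exact le_trans (min_le_left _ _) (hb k hk)

lemma cont_pieces {Y : Type*} [TopologicalSpace Y] (G : ℕ → Y → X)
    (hG : ∀ k, Continuous (G k)) :
    Continuous (fun p : Y × ℕ => G p.2 p.1) := by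
  rw [continuous_iff_continuousAt]
  rintro ⟨y, k⟩
  have hev : {q : Y × ℕ | q.2 = k} ∈ nhds (y, k) := by
    apply IsOpen.mem_nhds
    · have h2 : {q : Y × ℕ | q.2 = k} = Prod.snd ⁻¹' {k} := rfl
      rw [h2]
      exact (isOpen_discrete _).preimage continuous_snd
    · rfl
  apply ContinuousAt.congr (((hG k).comp continuous_fst).continuousAt)
  filter_upwards [hev] with q hq
  show G k q.1 = G q.2 q.1
  rw [hq]

theorem auxMain {X : Type} [MetricSpace X] (n : ℕ) (A : ℕ → Set X)
    (hcov : (⋃ i, A i) = Set.univ) (hZ : ∀ i, IsStrongZSet n (A i)) :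
    DiscreteNCellsProperty n X := by
  intro f 𝒰 hU
  have hXne : Nonempty X := ⟨f (Classical.arbitrary _)⟩
  set Φ := phi n A 𝒰 hZ hU with hΦ
  set F : ℕ → (Cube n) → X := fun k c => f (c, k) with hF
  have hFc : ∀ k, Continuous (F k) := fun k => f.continuous.comp (by continuity)
  set S : ℕ → ℕ → Set X := fun k m => (fun c => hmap Φ m (F k c)) '' Set.univ with hS
  have hScomp : ∀ k m, IsCompact (S k m) := fun k m =>
    (isCompact_univ.image ((hmap_continuous Φ m).comp (hFc k)))
  have hSne : ∀ k m, (S k m).Nonempty := fun k m =>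
    ⟨_, ⟨Classical.arbitrary _, trivial, rfl⟩⟩
  have hBA := fun k m => bigavoid n A 𝒰 hZ hU hcov (S k m) (hScomp k m)
  choose NN UU hUsub hUavoid using hBA
  set ar : ℕ → ℕ := fun k =>
    Nat.rec 0 (fun k' prev => max (k'+1) (max prev (NN k' prev))) k with har
  have harS : ∀ k, ar (k+1) = max (k+1) (max (ar k) (NN k (ar k))) := fun k => rfl
  have hark : ∀ k, k ≤ ar k := by
    intro k
    cases k with
    | zero => exact Nat.zero_le _
    | succ k => rw [harS]; exact le_max_left _ _
  have harmono : ∀ k, ar k ≤ ar (k+1) := by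
    intro k
    rw [harS]
    exact le_trans (le_max_left _ _) (le_max_right _ _)
  have harmono' : ∀ a b, a ≤ b → ar a ≤ ar b := by
    intro a b hab
    induction b with
    | zero => have : a = 0 := by omega
              subst this; exact le_refl _
    | succ b ihb =>
      rcases Nat.lt_or_ge a (b+1) with h | h
      · exact le_trans (ihb (by omega)) (harmono b)
      · have : a = b + 1 := by omega
        subst this; exact le_refl _
  have harNN : ∀ j k, j < k → NN j (ar j) ≤ ar k := by
    intro j k hjk
    have h1 : NN j (ar j) ≤ ar (j+1) := by
      rw [harS]
      exact le_trans (le_max_right _ _) (le_max_right _ _)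
    exact le_trans h1 (harmono' (j+1) k hjk)
  set G : ℕ → (Cube n) → X := fun k c => hmap Φ (ar k) (F k c) with hG
  have hg0c : Continuous (fun p : Cube n × ℕ => G p.2 p.1) :=
    cont_pieces G (fun k => (hmap_continuous Φ (ar k)).comp (hFc k))
  set g : C(Cube n × ℕ, X) := ⟨fun p => G p.2 p.1, hg0c⟩ with hg
  refine ⟨g, ?_, ?_⟩
  · intro z
    obtain ⟨U, hUm, hball⟩ := lam_ball hU (f z)
    have h1 := hmap_dist n A 𝒰 hZ hU (ar z.2) (f z)
    have h2 := lam_pos hU (f z)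
    have hpow0 : (0:ℝ) ≤ (1/2 : ℝ)^(ar z.2 + 1) := by positivity
    have hgz : g z = hmap Φ (ar z.2) (f z) := rfl
    refine ⟨U, hUm, ?_, ?_⟩
    · apply hball
      rw [Metric.mem_ball, hgz]
      nlinarith
    · apply hball
      rw [Metric.mem_ball, dist_self]
      linarith
  · intro x
    obtain ⟨i, hxi⟩ : ∃ i, x ∈ A i := by
      have : x ∈ ⋃ i, A i := by rw [hcov]; trivial
      exact Set.mem_iUnion.1 this
    have hI : 0 < Metric.infDist x (Set.range ⇑(Φ i)) := infDist_range_pos n A 𝒰 hZ hU hxi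
    set δ1 := Metric.infDist x (Set.range ⇑(Φ i)) / 2 with hδ1
    classical
    set c : ℕ → ℝ := fun k => if x ∈ S k (ar k) then 1
      else Metric.infDist x (S k (ar k)) / 2 with hcdef
    have hc : ∀ k ∈ Finset.range i, 0 < c k := by
      intro k _
      by_cases hx : x ∈ S k (ar k)
      · simp [hcdef, hx]
      · simp only [hcdef, if_neg hx]
        have := ((hScomp k (ar k)).isClosed.notMem_iff_infDist_pos (hSne k (ar k))).1 hx
        linarith
    obtain ⟨δ2, hδ2, hδ2b⟩ := finset_min (Finset.range i) c hc
    set δ := min δ1 δ2 with hδdef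
    have hδ : 0 < δ := lt_min (by linarith) hδ2
    refine ⟨Metric.ball x δ, Metric.ball_mem_nhds x hδ, ?_⟩
    have key : ∀ k, (∃ cc : Cube n, g (cc, k) ∈ Metric.ball x δ) →
        k < i ∧ x ∈ S k (ar k) := by
      rintro k ⟨cc, hcc⟩
      rw [Metric.mem_ball] at hcc
      have hgS : g (cc, k) ∈ S k (ar k) := ⟨cc, trivial, rfl⟩
      have hki : k < i := by
        by_contra hk
        push_neg at hk
        have him : i ≤ ar k := le_trans hk (hark k)
        have heq : g (cc, k) = psi Φ i (ar k) (hmap Φ i (f (cc, k))) :=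
          hmap_eq_psi Φ him _
        have hav := psi_avoid n A 𝒰 hZ hU him hxi _ (hmap_mem_range Φ i (f (cc, k)))
        rw [← heq] at hav
        have hd1 : δ ≤ δ1 := min_le_left _ _
        rw [hδ1] at hd1
        linarith
      refine ⟨hki, ?_⟩
      by_contra hx
      have hb := hδ2b k (Finset.mem_range.2 hki)
      rw [hcdef] at hb
      simp only [if_neg hx] at hb
      have hid : Metric.infDist x (S k (ar k)) ≤ dist x (g (cc, k)) :=
        Metric.infDist_le_dist_of_mem hgS
      have hd2 : δ ≤ δ2 := min_le_right _ _
      have hcx : dist x (g (cc, k)) = dist (g (cc, k)) x := dist_comm _ _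
      linarith
    have noTwo : ∀ a b, a < b → x ∈ S a (ar a) → x ∈ S b (ar b) → False := by
      intro a b hab hxa hxb
      obtain ⟨cc, _, hcc⟩ := hxb
      have hx2 : hmap Φ (ar b) (F b cc) = x := hcc
      have hxaU : x ∈ UU a (ar a) := hUsub a (ar a) hxa
      rw [← hx2] at hxaU
      exact hUavoid a (ar a) (ar b) (harNN a b hab) (F b cc) hxaU
    intro k1 hk1 k2 hk2
    obtain ⟨h1i, h1S⟩ := key k1 hk1
    obtain ⟨h2i, h2S⟩ := key k2 hk2
    rcases lt_trichotomy k1 k2 with h | h | h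
    · exact absurd (noTwo k1 k2 h h1S h2S) (by simp)
    · exact h
    · exact absurd (noTwo k2 k1 h h2S h1S) (by simp)

end ZProof

theorem statement9 (n : ℕ) (X : Type) [TopologicalSpace X] [MetrizableSpace X]
    [SeparableSpace X] (hdim : CovDimLE X n) (hLC : IsLCUpTo n X)
    (A : ℕ → Set X) (hcov : (⋃ i, A i) = Set.univ) (hZ : ∀ i, IsStrongZSet n (A i)) :
    DiscreteNCellsProperty n X := by
  letI : MetricSpace X := TopologicalSpace.metrizableSpaceMetric X
  exact ZProof.auxMain n A hcov hZ
end
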